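/- Let S be a regular ordered semigroup in which for all ordered idempotents e, f, e J f implies e H f. Then H = J on S: whenever a J b we also have a H b, and conversely. -/
import Mathlib


variable {S : Type*} [Semigroup S] [PartialOrder S]
  [CovariantClass S S (· * ·) (· ≤ ·)]
  [CovariantClass S S (Function.swap (· * ·)) (· ≤ ·)]

/-- Principal left ideal (S¹a] of an ordered semigroup. -/
def leftIdeal (a : S) : Set S := {t | t ≤ a ∨ ∃ x, t ≤ x * a}

/-- Principal right ideal (aS¹]. -/
def rightIdeal (a : S) : Set S := {t | t ≤ a ∨ ∃ x, t ≤ a * x}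

/-- Principal two-sided ideal (S¹aS¹]. -/
def twoIdeal (a : S) : Set S :=
  {t | t ≤ a ∨ (∃ x, t ≤ x * a) ∨ (∃ y, t ≤ a * y) ∨ (∃ x y, t ≤ x * a * y)}

def GreenL (a b : S) : Prop := leftIdeal a = leftIdeal b
def GreenR (a b : S) : Prop := rightIdeal a = rightIdeal b
def GreenH (a b : S) : Prop := GreenL a b ∧ GreenR a b
def GreenJ (a b : S) : Prop := twoIdeal a = twoIdeal b

/-- b is an (ordered) inverse of a. -/
def OrdInv (a b : S) : Prop := a ≤ a * b * a ∧ b ≤ b * a * b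

lemma self_mem_left (a : S) : a ∈ leftIdeal a := Or.inl le_rfl
lemma self_mem_right (a : S) : a ∈ rightIdeal a := Or.inl le_rfl

lemma left_sub {a b : S} (h : a ∈ leftIdeal b) : leftIdeal a ⊆ leftIdeal b := by
  intro t ht
  rcases h with h1 | ⟨x, h1⟩
  · rcases ht with h2 | ⟨y, h2⟩
    · exact Or.inl (h2.trans h1)
    · exact Or.inr ⟨y, h2.trans (mul_le_mul_right h1 y)⟩
  · rcases ht with h2 | ⟨y, h2⟩
    · exact Or.inr ⟨x, h2.trans h1⟩
    · exact Or.inr ⟨y * x, h2.trans ((mul_le_mul_right h1 y).trans_eq (mul_assoc ..).symm)⟩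

lemma right_sub {a b : S} (h : a ∈ rightIdeal b) : rightIdeal a ⊆ rightIdeal b := by
  intro t ht
  rcases h with h1 | ⟨x, h1⟩
  · rcases ht with h2 | ⟨y, h2⟩
    · exact Or.inl (h2.trans h1)
    · exact Or.inr ⟨y, h2.trans (mul_le_mul_left h1 y)⟩
  · rcases ht with h2 | ⟨y, h2⟩
    · exact Or.inr ⟨x, h2.trans h1⟩
    · exact Or.inr ⟨x * y, h2.trans ((mul_le_mul_left h1 y).trans_eq (mul_assoc ..))⟩

lemma two_down {a b t : S} (h : t ≤ a) (ha : a ∈ twoIdeal b) : t ∈ twoIdeal b := by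
  rcases ha with h1 | ⟨x, h1⟩ | ⟨y, h1⟩ | ⟨x, y, h1⟩
  · exact Or.inl (h.trans h1)
  · exact Or.inr (Or.inl ⟨x, h.trans h1⟩)
  · exact Or.inr (Or.inr (Or.inl ⟨y, h.trans h1⟩))
  · exact Or.inr (Or.inr (Or.inr ⟨x, y, h.trans h1⟩))

lemma two_mul_left {a b : S} (x : S) (ha : a ∈ twoIdeal b) : x * a ∈ twoIdeal b := by
  rcases ha with h1 | ⟨u, h1⟩ | ⟨v, h1⟩ | ⟨u, v, h1⟩
  · exact Or.inr (Or.inl ⟨x, mul_le_mul_right h1 x⟩)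
  · exact Or.inr (Or.inl ⟨x * u, (mul_le_mul_right h1 x).trans_eq (by rw [mul_assoc])⟩)
  · exact Or.inr (Or.inr (Or.inr ⟨x, v,
      (mul_le_mul_right h1 x).trans_eq (by rw [mul_assoc])⟩))
  · exact Or.inr (Or.inr (Or.inr ⟨x * u, v,
      (mul_le_mul_right h1 x).trans_eq (by simp [mul_assoc])⟩))

lemma two_mul_right {a b : S} (y : S) (ha : a ∈ twoIdeal b) : a * y ∈ twoIdeal b := by
  rcases ha with h1 | ⟨u, h1⟩ | ⟨v, h1⟩ | ⟨u, v, h1⟩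
  · exact Or.inr (Or.inr (Or.inl ⟨y, mul_le_mul_left h1 y⟩))
  · exact Or.inr (Or.inr (Or.inr ⟨u, y, mul_le_mul_left h1 y⟩))
  · exact Or.inr (Or.inr (Or.inl ⟨v * y,
      (mul_le_mul_left h1 y).trans_eq (by rw [mul_assoc])⟩))
  · exact Or.inr (Or.inr (Or.inr ⟨u, v * y,
      (mul_le_mul_left h1 y).trans_eq (by simp [mul_assoc])⟩))

lemma two_sub {a b : S} (ha : a ∈ twoIdeal b) : twoIdeal a ⊆ twoIdeal b := by
  intro t ht
  rcases ht with h2 | ⟨x, h2⟩ | ⟨y, h2⟩ | ⟨x, y, h2⟩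
  · exact two_down h2 ha
  · exact two_down h2 (two_mul_left x ha)
  · exact two_down h2 (two_mul_right y ha)
  · exact two_down h2 (two_mul_right y (two_mul_left x ha))

lemma left_sub_two {a : S} : leftIdeal a ⊆ twoIdeal a := by
  intro t ht
  rcases ht with h | ⟨x, h⟩
  · exact Or.inl h
  · exact Or.inr (Or.inl ⟨x, h⟩)

lemma right_sub_two {a : S} : rightIdeal a ⊆ twoIdeal a := by
  intro t ht
  rcases ht with h | ⟨x, h⟩
  · exact Or.inl h
  · exact Or.inr (Or.inr (Or.inl ⟨x, h⟩))

lemma GreenL_to_J {a b : S} (h : GreenL a b) : GreenJ a b := by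
  have hab : a ∈ leftIdeal b := h ▸ self_mem_left a
  have hba : b ∈ leftIdeal a := h.symm ▸ self_mem_left b
  exact Set.Subset.antisymm (two_sub (left_sub_two hab)) (two_sub (left_sub_two hba))

lemma GreenR_to_J {a b : S} (h : GreenR a b) : GreenJ a b := by
  have hab : a ∈ rightIdeal b := h ▸ self_mem_right a
  have hba : b ∈ rightIdeal a := h.symm ▸ self_mem_right b
  exact Set.Subset.antisymm (two_sub (right_sub_two hab)) (two_sub (right_sub_two hba))

lemma GreenL_of_reg {a x : S} (hx : a ≤ a * x * a) : GreenL a (x * a) := by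
  have h1 : a ∈ leftIdeal (x * a) := Or.inr ⟨a, hx.trans_eq (mul_assoc ..)⟩
  have h2 : x * a ∈ leftIdeal a := Or.inr ⟨x, le_rfl⟩
  exact Set.Subset.antisymm (left_sub h1) (left_sub h2)

lemma GreenR_of_reg {a x : S} (hx : a ≤ a * x * a) : GreenR a (a * x) := by
  have h1 : a ∈ rightIdeal (a * x) := Or.inr ⟨a, hx⟩
  have h2 : a * x ∈ rightIdeal a := Or.inr ⟨x, le_rfl⟩
  exact Set.Subset.antisymm (right_sub h1) (right_sub h2)

theorem stmt16
    (hreg : ∀ a : S, ∃ x, a ≤ a * x * a)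
    (hcond : ∀ e f : S, e ≤ e * e → f ≤ f * f → GreenJ e f → GreenH e f) :
    ∀ a b : S, GreenJ a b ↔ GreenH a b := by
  intro a b
  constructor
  · intro hJ
    obtain ⟨x, hx⟩ := hreg a
    obtain ⟨y, hy⟩ := hreg b
    -- ordered idempotents
    have hxa : x * a ≤ (x * a) * (x * a) := by
      have := mul_le_mul_right hx x
      calc x * a ≤ x * (a * x * a) := this
        _ = (x * a) * (x * a) := by simp [mul_assoc]
    have hax : a * x ≤ (a * x) * (a * x) := by
      have := mul_le_mul_left hx x
      calc a * x ≤ (a * x * a) * x := this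
        _ = (a * x) * (a * x) := by simp [mul_assoc]
    have hyb : y * b ≤ (y * b) * (y * b) := by
      have := mul_le_mul_right hy y
      calc y * b ≤ y * (b * y * b) := this
        _ = (y * b) * (y * b) := by simp [mul_assoc]
    have hby : b * y ≤ (b * y) * (b * y) := by
      have := mul_le_mul_left hy y
      calc b * y ≤ (b * y * b) * y := this
        _ = (b * y) * (b * y) := by simp [mul_assoc]
    have hLa := GreenL_of_reg hx
    have hLb := GreenL_of_reg hy
    have hRa := GreenR_of_reg hx
    have hRb := GreenR_of_reg hy
    -- x*a J y*b and a*x J b*y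
    have hJL : GreenJ (x * a) (y * b) :=
      ((GreenL_to_J hLa).symm.trans hJ).trans (GreenL_to_J hLb)
    have hJR : GreenJ (a * x) (b * y) :=
      ((GreenR_to_J hRa).symm.trans hJ).trans (GreenR_to_J hRb)
    have hHL := hcond _ _ hxa hyb hJL
    have hHR := hcond _ _ hax hby hJR
    exact ⟨hLa.trans (hHL.1.trans hLb.symm), hRa.trans (hHR.2.trans hRb.symm)⟩
  · intro hH
    exact GreenL_to_J hH.1
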